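/- arXiv:2105.10703 — 2 statements merged into one kernel-verified Lean document; each statement's English description precedes it below -/
import Mathlib

section
/- Suppose φ satisfies the stated assumption and fix q ∈ [1,∞). Given any x̃ ∈ ℝ^N, there exists δ > 0 (depending on x̃, A, b, β, q, φ and the vectors G_i) such that every local minimizer x̂ of F with ‖x̂ − x̃‖₂ < δ satisfies the support inclusion property: for every i ∈ J, if G_iᵀ x̃ = 0 then G_iᵀ x̂ = 0. (The paper proves this for all stationary points of F, a class which includes all local minimizers.) -/
/-- The dot product `gᵀ x` of two vectors in `ℝ^N`. -/
noncomputable def dotp {N : ℕ} (g x : Fin N → ℝ) : ℝ := ∑ l, g l * x l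

/-- The Euclidean norm `‖x‖₂` on `ℝ^N`. -/
noncomputable def norm2 {N : ℕ} (x : Fin N → ℝ) : ℝ := Real.sqrt (∑ l, (x l) ^ 2)

/-- Assumptions on the potential function `φ` (with derivative `φ'` on `(0,∞)`):
continuous, concave and coercive on `[0,∞)` with `φ(0) = 0`; continuously
differentiable on `(0,∞)` with positive derivative there, `φ'(0⁺) = +∞`, and
`φ'` Lipschitz on every `[α,∞)` with `α > 0`. -/
structure PhiAssumption (φ φ' : ℝ → ℝ) : Prop where
  nonneg : ∀ t : ℝ, 0 ≤ t → 0 ≤ φ t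
  zero : φ 0 = 0
  cont : ContinuousOn φ (Set.Ici 0)
  concave : ConcaveOn ℝ (Set.Ici 0) φ
  coercive : Filter.Tendsto φ Filter.atTop Filter.atTop
  hasDeriv : ∀ t : ℝ, 0 < t → HasDerivAt φ (φ' t) t
  derivCont : ContinuousOn φ' (Set.Ioi 0)
  derivPos : ∀ t : ℝ, 0 < t → 0 < φ' t
  derivAtZero : Filter.Tendsto φ' (nhdsWithin 0 (Set.Ioi 0)) Filter.atTop
  derivLip : ∀ α : ℝ, 0 < α → ∃ L : ℝ, ∀ s : ℝ, α ≤ s → ∀ t : ℝ, α ≤ t →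
    |φ' s - φ' t| ≤ L * |s - t|

/-- The objective function
`F(x) = Σ_{i∈J} φ(|G_iᵀ x|) + (β/q) ‖Ax − b‖_q^q`. -/
noncomputable def objF {M N : ℕ} {ι : Type} [Fintype ι] (φ : ℝ → ℝ)
    (A : Matrix (Fin M) (Fin N) ℝ) (b : Fin M → ℝ) (G : ι → Fin N → ℝ)
    (β q : ℝ) (x : Fin N → ℝ) : ℝ :=
  (∑ i : ι, φ |dotp (G i) x|) + (β / q) * ∑ l, |A.mulVec x l - b l| ^ q

/-!
Let `S` be the set of indices with `G_iᵀ x̃ = 0`. Near `x̃` the rest of `F` (the `φ`-terms with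
`G_iᵀ x̃ ≠ 0`, which stay away from the kink of `φ` at `0`, and the convex fidelity term) is
`K`-Lipschitz. Suppose a local minimizer `x̂` near `x̃` had `c := max_{i ∈ S} |G_iᵀ x̂| > 0`.
In finite dimension there is a `y` with `G_iᵀ y = 0` for all `i ∈ S` and `‖x̂ - y‖ ≤ C c`.
Moving from `x̂` towards `y` by a small step `τ` multiplies every `S`-term by `1 - τ`, and by
concavity the largest one drops by at least `τ c φ'(c)`, while the rest of `F` grows by at most
`K τ C c`. Hence `φ'(c) ≤ K C`, which is impossible close to `x̃`, where `c` is small and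
`φ'(0⁺) = +∞`.
-/

open Filter Topology Set
open scoped NNReal

section Lipschitz

variable {α β γ : Type*} [PseudoEMetricSpace α] [PseudoEMetricSpace β] [PseudoEMetricSpace γ]

lemma LocallyLipschitzOn.comp_locallyLipschitz {f : β → γ} {g : α → β} {t : Set β}
    (hf : LocallyLipschitzOn t f) (ht : IsOpen t) (hg : LocallyLipschitz g) :
    LocallyLipschitzOn (g ⁻¹' t) (f ∘ g) := by
  intro x hx
  obtain ⟨Kg, u, hu, hgu⟩ := hg x
  obtain ⟨Kf, v, hv, hfv⟩ := hf hx
  rw [ht.nhdsWithin_eq hx] at hv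
  exact ⟨Kf * Kg, u ∩ g ⁻¹' v,
    mem_nhdsWithin_of_mem_nhds (inter_mem hu (hg.continuous.continuousAt hv)),
    hfv.comp (hgu.mono inter_subset_left) ((mapsTo_preimage g v).mono_left inter_subset_right)⟩

lemma LocallyLipschitzOn.fun_sum {E ι : Type*} [SeminormedAddCommGroup E] {s : Set α}
    (t : Finset ι) {f : ι → α → E} (hf : ∀ i ∈ t, LocallyLipschitzOn s (f i)) :
    LocallyLipschitzOn s fun x => ∑ i ∈ t, f i x := by
  classical
  induction t using Finset.induction_on with
  | empty => simpa using (LocallyLipschitz.const (0 : E)).locallyLipschitzOn (s := s)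
  | insert i t hi ih =>
    simp only [Finset.sum_insert hi]
    exact (hf i (Finset.mem_insert_self i t)).add
      (ih fun j hj => hf j (Finset.mem_insert_of_mem hj))

end Lipschitz

lemma locallyLipschitz_abs_rpow {q : ℝ} (hq : 1 ≤ q) : LocallyLipschitz fun t : ℝ => |t| ^ q := by
  have habs : (fun t : ℝ => |t|) '' univ = Ici 0 := by
    ext t
    simp only [image_univ, mem_range, mem_Ici]
    exact ⟨fun ⟨s, hs⟩ => hs ▸ abs_nonneg s, fun ht => ⟨t, abs_of_nonneg ht⟩⟩
  have hconv : ConvexOn ℝ univ fun t : ℝ => |t| ^ q := by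
    refine ConvexOn.comp (f := fun t : ℝ => |t|) (g := fun t : ℝ => t ^ q) ?_ ?_ ?_
    · rw [habs]; exact convexOn_rpow hq
    · exact (convexOn_norm (E := ℝ) convex_univ).congr fun t _ => Real.norm_eq_abs t
    · rw [habs]; exact Real.monotoneOn_rpow_Ici_of_exponent_nonneg (by linarith)
  simpa using hconv.locallyLipschitzOn isOpen_univ

lemma LinearMap.exists_mem_ker_norm_sub_le {𝕜 E F : Type*} [NontriviallyNormedField 𝕜]
    [CompleteSpace 𝕜] [NormedAddCommGroup E] [NormedSpace 𝕜 E] [FiniteDimensional 𝕜 E]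
    [NormedAddCommGroup F] [NormedSpace 𝕜 F] (T : E →ₗ[𝕜] F) :
    ∃ C : ℝ, 0 ≤ C ∧ ∀ x, ∃ y ∈ ker T, ‖x - y‖ ≤ C * ‖T x‖ := by
  obtain ⟨p, hp⟩ := (ker T).exists_isCompl
  have hinj : ker (T ∘ₗ p.subtype) = ⊥ := by
    rw [ker_comp, ← Submodule.disjoint_iff_comap_eq_bot]
    exact hp.disjoint.symm
  obtain ⟨K, -, hK⟩ := (T ∘ₗ p.subtype).exists_antilipschitzWith hinj
  refine ⟨K, K.2, fun x => ?_⟩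
  obtain ⟨z, hz, y, hy, rfl⟩ :=
    Submodule.mem_sup.mp (hp.symm.sup_eq_top ▸ Submodule.mem_top (x := x))
  refine ⟨y, hy, ?_⟩
  have := hK.le_mul_dist ⟨z, hz⟩ 0
  simpa [dist_eq_norm, mem_ker.mp hy] using this

namespace PhiAssumption

variable {φ φ' : ℝ → ℝ}

lemma le_sub_mul_deriv (hφ : PhiAssumption φ φ') {v c : ℝ} (hv : 0 ≤ v) (hvc : v < c) :
    φ v ≤ φ c - (c - v) * φ' c := by
  have h := hφ.concave.le_slope_of_hasDerivAt hv (hv.trans hvc.le) hvc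
    (hφ.hasDeriv c (hv.trans_lt hvc))
  rw [slope_def_field, le_div_iff₀ (sub_pos.mpr hvc)] at h
  linarith

lemma monotoneOn (hφ : PhiAssumption φ φ') : MonotoneOn φ (Ici 0) := by
  intro v hv c _ hvc
  rcases hvc.lt_or_eq with hvc | rfl
  · have := hφ.le_sub_mul_deriv hv hvc
    nlinarith [hφ.derivPos c (lt_of_le_of_lt hv hvc)]
  · rfl

lemma locallyLipschitzOn (hφ : PhiAssumption φ φ') : LocallyLipschitzOn (Ioi 0) φ :=
  (hφ.concave.subset Ioi_subset_Ici_self (convex_Ioi 0)).locallyLipschitzOn isOpen_Ioi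

variable {E ι : Type*} [NormedAddCommGroup E] [NormedSpace ℝ E] [Fintype ι]

lemma locallyLipschitzOn_sum_abs (hφ : PhiAssumption φ φ') (g : ι → E →L[ℝ] ℝ) :
    LocallyLipschitzOn {x | ∀ i, g i x ≠ 0} fun x => ∑ i, φ |g i x| := by
  refine LocallyLipschitzOn.fun_sum _ fun i _ => ?_
  have habs : LocallyLipschitz fun x => |g i x| :=
    (lipschitzWith_one_norm.comp (g i).lipschitz).locallyLipschitz
  exact (hφ.locallyLipschitzOn.comp_locallyLipschitz isOpen_Ioi habs).mono
    fun x hx => abs_pos.mpr (hx i)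

theorem deriv_le_of_isLocalMin (hφ : PhiAssumption φ φ') {g : ι → E →L[ℝ] ℝ} {H : E → ℝ}
    {K : ℝ≥0} {t : Set E} {x y : E} (hmin : IsLocalMin (fun z => ∑ i, φ |g i z| + H z) x)
    (ht : t ∈ 𝓝 x) (hH : LipschitzOnWith K H t) (hy : ∀ i, g i y = 0) {j : ι}
    (hj : 0 < |g j x|) {C : ℝ} (hxy : ‖x - y‖ ≤ C * |g j x|) : φ' |g j x| ≤ K * C := by
  set c := |g j x|
  set path : ℝ → E := fun τ => x + τ • (y - x)
  have hpath : Tendsto path (𝓝[>] 0) (𝓝 x) := by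
    have : Continuous path := by fun_prop
    simpa [path] using (this.tendsto 0).mono_left nhdsWithin_le_nhds
  have hτ : ∀ᶠ τ in 𝓝[>] (0 : ℝ), τ < 1 ∧ 0 < τ :=
    ((eventually_lt_nhds one_pos).filter_mono nhdsWithin_le_nhds).and self_mem_nhdsWithin
  obtain ⟨τ, ⟨hFτ, hτt⟩, hτ1, hτ0⟩ := ((hpath.eventually (hmin.and ht)).and hτ).exists
  have hgτ : ∀ i, |g i (path τ)| = (1 - τ) * |g i x| := by
    intro i
    simp only [path, map_add, map_smul, map_sub, hy, smul_eq_mul]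
    rw [show g i x + τ * (0 - g i x) = (1 - τ) * g i x by ring, abs_mul,
      abs_of_nonneg (by linarith)]
  have hdecrease : τ * c * φ' c ≤ ∑ i, (φ |g i x| - φ |g i (path τ)|) := by
    have hterm : ∀ i, 0 ≤ φ |g i x| - φ |g i (path τ)| := fun i => by
      rw [hgτ, sub_nonneg]
      exact hφ.monotoneOn (mem_Ici.mpr (mul_nonneg (by linarith) (abs_nonneg _)))
        (mem_Ici.mpr (abs_nonneg _)) (mul_le_of_le_one_left (abs_nonneg _) (by linarith))
    have hdrop : τ * c * φ' c ≤ φ c - φ ((1 - τ) * c) := by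
      have := hφ.le_sub_mul_deriv (mul_nonneg (by linarith) hj.le)
        (by nlinarith : (1 - τ) * c < c)
      linarith
    calc τ * c * φ' c ≤ φ |g j x| - φ |g j (path τ)| := by rwa [hgτ]
      _ ≤ _ := Finset.single_le_sum (fun i _ => hterm i) (Finset.mem_univ j)
  have hincrease : H (path τ) - H x ≤ K * (τ * (C * c)) := by
    calc H (path τ) - H x ≤ dist (H (path τ)) (H x) := le_abs_self _
      _ ≤ K * dist (path τ) x := hH.dist_le_mul _ hτt _ (mem_of_mem_nhds ht)
      _ = K * (τ * ‖x - y‖) := by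
        rw [dist_eq_norm, show path τ - x = τ • (y - x) by simp [path], norm_smul,
          Real.norm_of_nonneg hτ0.le, norm_sub_rev]
      _ ≤ K * (τ * (C * c)) := by gcongr
  refine le_of_mul_le_mul_left ?_ (mul_pos hτ0 hj)
  simp only [Finset.sum_sub_distrib] at hdecrease
  linarith [show ∑ i, φ |g i x| + H x ≤ ∑ i, φ |g i (path τ)| + H (path τ) from hFτ]

theorem eventually_forall_eq_zero_of_isLocalMin [FiniteDimensional ℝ E]
    (hφ : PhiAssumption φ φ') (g : ι → E →L[ℝ] ℝ) {H : E → ℝ} {s : Set E} {x₀ : E}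
    (hg : ∀ i, g i x₀ = 0) (hs : s ∈ 𝓝 x₀) (hH : LocallyLipschitzOn s H) :
    ∀ᶠ x in 𝓝 x₀, IsLocalMin (fun z => ∑ i, φ |g i z| + H z) x → ∀ i, g i x = 0 := by
  obtain ⟨C, hC0, hC⟩ := (ContinuousLinearMap.pi g).toLinearMap.exists_mem_ker_norm_sub_le
  obtain ⟨K, t, ht, hHt⟩ := hH (mem_of_mem_nhds hs)
  rw [nhdsWithin_eq_nhds.mpr hs] at ht
  have hlarge : ∀ᶠ u in 𝓝 (0 : ℝ), 0 < u → K * C < φ' u :=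
    eventually_nhdsWithin_iff.mp (hφ.derivAtZero.eventually_gt_atTop _)
  have hsmall : ∀ᶠ x in 𝓝 x₀, ∀ i, 0 < |g i x| → K * C < φ' |g i x| := by
    refine eventually_all.mpr fun i => ?_
    have : Tendsto (fun x => |g i x|) (𝓝 x₀) (𝓝 0) := by
      simpa [hg i] using ((g i).continuous.abs.tendsto x₀)
    exact this.eventually hlarge
  filter_upwards [hsmall, eventually_mem_nhds_iff.mpr ht] with x hsmall hxt hmin i
  by_contra hne
  have : Nonempty ι := ⟨i⟩
  obtain ⟨j, hj⟩ := Finite.exists_max fun i => |g i x|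
  have hjpos : 0 < |g j x| := (abs_pos.mpr hne).trans_le (hj i)
  obtain ⟨y, hy, hxy⟩ := hC x
  have hnorm : ‖ContinuousLinearMap.pi g x‖ ≤ |g j x| :=
    (pi_norm_le_iff_of_nonneg (abs_nonneg _)).mpr fun i => hj i
  have := hφ.deriv_le_of_isLocalMin hmin hxt hHt (fun i => congrFun (LinearMap.mem_ker.mp hy) i)
    hjpos (hxy.trans (mul_le_mul_of_nonneg_left hnorm hC0))
  exact (hsmall j hjpos).not_ge this

end PhiAssumption

lemma norm_le_norm2 {N : ℕ} (x : Fin N → ℝ) : ‖x‖ ≤ norm2 x :=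
  (pi_norm_le_iff_of_nonneg (Real.sqrt_nonneg _)).mpr fun l => by
    rw [Real.norm_eq_abs, ← Real.sqrt_sq_eq_abs]
    exact Real.sqrt_le_sqrt (Finset.single_le_sum (fun i _ => sq_nonneg (x i)) (Finset.mem_univ l))

lemma continuous_norm2 {N : ℕ} : Continuous (norm2 : (Fin N → ℝ) → ℝ) := by
  unfold norm2; fun_prop

lemma locallyLipschitz_mul_sum_abs_mulVec_sub_rpow {m n : Type*} [Fintype m] [Fintype n]
    (A : Matrix m n ℝ) (b : m → ℝ) (c : ℝ) {q : ℝ} (hq : 1 ≤ q) :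
    LocallyLipschitz fun x : n → ℝ => c * ∑ l, |A.mulVec x l - b l| ^ q := by
  have hterm (l : m) : LocallyLipschitz fun x : n → ℝ => |A.mulVec x l - b l| ^ q :=
    (locallyLipschitz_abs_rpow hq).comp (ContDiff.locallyLipschitz (𝕂 := ℝ) (by
      simp only [Matrix.mulVec, dotProduct]; fun_prop))
  have hsum := LocallyLipschitzOn.fun_sum (s := univ) Finset.univ fun l _ =>
    (hterm l).locallyLipschitzOn
  rw [locallyLipschitzOn_univ] at hsum
  exact (lipschitzWith_smul c).locallyLipschitz.comp hsum

theorem support_inclusion_general {M N : ℕ}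
    {ι : Type} [Fintype ι]
    (A : Matrix (Fin M) (Fin N) ℝ) (b : Fin M → ℝ) (G : ι → Fin N → ℝ)
    (β q : ℝ) (hq : 1 ≤ q)
    (φ φ' : ℝ → ℝ) (hφ : PhiAssumption φ φ')
    (xt : Fin N → ℝ) :
    ∃ δ > (0 : ℝ), ∀ xh : Fin N → ℝ,
      (∃ ε > (0 : ℝ), ∀ x : Fin N → ℝ, norm2 (x - xh) < ε →
        objF φ A b G β q xh ≤ objF φ A b G β q x) →
      norm2 (xh - xt) < δ →
      ∀ i : ι, dotp (G i) xt = 0 → dotp (G i) xh = 0 := by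
  classical
  let g (i : ι) : (Fin N → ℝ) →L[ℝ] ℝ :=
    LinearMap.toContinuousLinearMap (dotProductBilin ℝ ℝ (G i))
  let H (x : Fin N → ℝ) : ℝ :=
    ∑ i : {i // ¬dotp (G i) xt = 0}, φ |g i x| + (β / q) * ∑ l, |A.mulVec x l - b l| ^ q
  have hF : objF φ A b G β q = fun x => ∑ i : {i // dotp (G i) xt = 0}, φ |g i x| + H x := by
    funext x
    rw [objF, ← Fintype.sum_subtype_add_sum_subtype (fun i => dotp (G i) xt = 0), add_assoc]
    rfl
  have hH : LocallyLipschitzOn {x | ∀ i : {i // ¬dotp (G i) xt = 0}, g i x ≠ 0} H :=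
    (hφ.locallyLipschitzOn_sum_abs _).add
      (locallyLipschitz_mul_sum_abs_mulVec_sub_rpow A b _ hq).locallyLipschitzOn
  have hU : {x | ∀ i : {i // ¬dotp (G i) xt = 0}, g i x ≠ 0} ∈ 𝓝 xt :=
    eventually_all.mpr fun i => (g i).continuous.continuousAt.eventually_ne (by exact i.2)
  obtain ⟨δ, hδ, hδP⟩ := Metric.eventually_nhds_iff.mp
    (hφ.eventually_forall_eq_zero_of_isLocalMin (fun i : {i // dotp (G i) xt = 0} => g i)
      (fun i => i.2) hU hH)
  refine ⟨δ, hδ, fun xh ⟨ε, hε, hmin⟩ hclose i hi => ?_⟩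
  have hlocal : IsLocalMin (objF φ A b G β q) xh :=
    ((continuous_norm2.comp (continuous_sub_right xh)).continuousAt.eventually_lt
      continuousAt_const (by simpa [norm2] using hε)).mono hmin
  rw [hF] at hlocal
  exact hδP ((dist_eq_norm _ _).trans_le (norm_le_norm2 _) |>.trans_lt hclose) hlocal ⟨i, hi⟩

/-- support inclusion property. Under the assumptions on `φ`,
for `q ∈ [1,∞)` and any given `x̃`, there is `δ > 0` such that every local
minimizer `x̂` of `F` with `‖x̂ − x̃‖₂ < δ` satisfies: for all `i ∈ J`,
`G_iᵀ x̃ = 0` implies `G_iᵀ x̂ = 0`. -/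
theorem support_inclusion {M N : ℕ} (hM : 0 < M) (hN : 0 < N)
    {ι : Type} [Fintype ι]
    (A : Matrix (Fin M) (Fin N) ℝ) (b : Fin M → ℝ) (G : ι → Fin N → ℝ)
    (β q : ℝ) (hβ : 0 < β) (hq : 1 ≤ q)
    (φ φ' : ℝ → ℝ) (hφ : PhiAssumption φ φ')
    (xt : Fin N → ℝ) :
    ∃ δ > (0 : ℝ), ∀ xh : Fin N → ℝ,
      (∃ ε > (0 : ℝ), ∀ x : Fin N → ℝ, norm2 (x - xh) < ε →
        objF φ A b G β q xh ≤ objF φ A b G β q x) →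
      norm2 (xh - xt) < δ →
      ∀ i : ι, dotp (G i) xt = 0 → dotp (G i) xh = 0 :=
  support_inclusion_general A b G β q hq φ φ' hφ xt
end

section
/- (Uniform lower bound for the iterate differences.) Suppose φ satisfies the stated assumption. Let S̄ ⊆ J be nonempty, C̄ = {x ∈ ℝ^N : G_iᵀ x = 0 for all i ∈ J \ S̄}, and fix ρ > 0, 0 < ε < 1, Γ > 0 and an integer K ≥ 0. Suppose {x^k}_{k≥K} is a sequence in ℝ^N such that for every k ≥ K: ‖x^k‖₂ ≤ Γ, S(x^k) = S̄, and there exists h^{k+1} ∈ ℝ^N with H_k(y) ≥ H_k(x^{k+1}) + ⟨h^{k+1}, y − x^{k+1}⟩ for all y ∈ C̄ and ‖h^{k+1}‖₂ ≤ (ρε/2)‖x^{k+1} − x^k‖₂, where H_k(x) = Σ_{i∈S̄} [φ(|G_iᵀ x^k|) + φ'(|G_iᵀ x^k|)(|G_iᵀ x| − |G_iᵀ x^k|)] + (β/q)‖Ax − b‖_q^q + (ρ/2)‖x − x^k‖₂². Then there exists a constant θ̄ > 0 (depending only on Γ, ρ, ε, β, q, A, b, φ and the vectors G_i) such that |G_iᵀ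 x^k| ≥ θ̄ for every k > K and every i ∈ S̄. -/
/-- The linearized, proximally regularized surrogate
`H_k(x) = Σ_{i∈S̄}[φ(|G_iᵀ x^k|) + φ'(|G_iᵀ x^k|)(|G_iᵀ x| − |G_iᵀ x^k|)]
        + (β/q)‖Ax − b‖_q^q + (ρ/2)‖x − x^k‖₂²`. -/
noncomputable def surrogate {M N : ℕ} {ι : Type} [Fintype ι] (φ φ' : ℝ → ℝ)
    (A : Matrix (Fin M) (Fin N) ℝ) (b : Fin M → ℝ) (G : ι → Fin N → ℝ)
    (β q ρ : ℝ) (Sb : Finset ι) (xk x : Fin N → ℝ) : ℝ :=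
  (∑ i ∈ Sb, (φ |dotp (G i) xk| +
      φ' |dotp (G i) xk| * (|dotp (G i) x| - |dotp (G i) xk|)))
    + (β / q) * (∑ l, |A.mulVec x l - b l| ^ q) + ρ / 2 * norm2 (x - xk) ^ 2

/-! ### Auxiliary lemmas about `dotp` and `norm2` -/

lemma norm2_nonneg' {N : ℕ} (x : Fin N → ℝ) : 0 ≤ norm2 x := Real.sqrt_nonneg _

lemma norm2_sq' {N : ℕ} (x : Fin N → ℝ) : norm2 x ^ 2 = ∑ l, (x l) ^ 2 :=
  Real.sq_sqrt (Finset.sum_nonneg fun l _ => sq_nonneg _)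

lemma dotp_le' {N : ℕ} (g x : Fin N → ℝ) : dotp g x ≤ norm2 g * norm2 x :=
  Real.sum_mul_le_sqrt_mul_sqrt _ _ _

lemma norm2_neg' {N : ℕ} (g : Fin N → ℝ) : norm2 (-g) = norm2 g := by
  unfold norm2; congr 1; exact Finset.sum_congr rfl fun l _ => by simp

lemma abs_dotp_le' {N : ℕ} (g x : Fin N → ℝ) : |dotp g x| ≤ norm2 g * norm2 x := by
  rw [abs_le]
  constructor
  · have h := dotp_le' (-g) x
    have : dotp (-g) x = -dotp g x := by
      unfold dotp; rw [← Finset.sum_neg_distrib]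
      exact Finset.sum_congr rfl fun l _ => by simp
    rw [this, norm2_neg'] at h; linarith
  · exact dotp_le' g x

lemma dotp_sub_right' {N : ℕ} (g x y : Fin N → ℝ) :
    dotp g (x - y) = dotp g x - dotp g y := by
  unfold dotp; rw [← Finset.sum_sub_distrib]
  exact Finset.sum_congr rfl fun l _ => by simp [mul_sub]

lemma dotp_neg_right' {N : ℕ} (g x : Fin N → ℝ) : dotp g (-x) = -dotp g x := by
  unfold dotp; rw [← Finset.sum_neg_distrib]
  exact Finset.sum_congr rfl fun l _ => by simp

lemma dotp_smul_right' {N : ℕ} (g : Fin N → ℝ) (s : ℝ) (x : Fin N → ℝ) :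
    dotp g (s • x) = s * dotp g x := by
  unfold dotp; rw [Finset.mul_sum]
  exact Finset.sum_congr rfl fun l _ => by simp; ring

lemma norm2_smul' {N : ℕ} (s : ℝ) (x : Fin N → ℝ) : norm2 (s • x) = |s| * norm2 x := by
  unfold norm2
  rw [show ∑ l, ((s • x) l) ^ 2 = s ^ 2 * ∑ l, (x l) ^ 2 by
    rw [Finset.mul_sum]; exact Finset.sum_congr rfl fun l _ => by simp; ring]
  rw [Real.sqrt_mul (sq_nonneg s), Real.sqrt_sq_eq_abs]

lemma sum_sub_sq' {N : ℕ} (z w : Fin N → ℝ) (s : ℝ) :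
    norm2 (z - s • w) ^ 2 = norm2 z ^ 2 - 2 * s * dotp w z + s ^ 2 * norm2 w ^ 2 := by
  rw [norm2_sq', norm2_sq', norm2_sq']
  unfold dotp
  rw [show ∑ l, ((z - s • w) l) ^ 2
      = ∑ l, ((z l) ^ 2 - (2 * s) * (w l * z l) + s ^ 2 * (w l) ^ 2) from
    Finset.sum_congr rfl fun l _ => by simp [Pi.sub_apply]; ring]
  rw [Finset.sum_add_distrib, Finset.sum_sub_distrib, Finset.mul_sum, Finset.mul_sum]

lemma norm2_sub_le' {N : ℕ} (x y : Fin N → ℝ) : norm2 (x - y) ≤ norm2 x + norm2 y := by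
  have h1 : norm2 (x - y) ^ 2 ≤ (norm2 x + norm2 y) ^ 2 := by
    have := sum_sub_sq' x y 1
    rw [one_smul] at this
    have hd : -dotp y x ≤ norm2 y * norm2 x := by
      have h2 := abs_dotp_le' y x; have h3 := neg_abs_le (dotp y x); linarith
    nlinarith [norm2_nonneg' x, norm2_nonneg' y]
  have h2 : 0 ≤ norm2 x + norm2 y := by linarith [norm2_nonneg' x, norm2_nonneg' y]
  nlinarith [norm2_nonneg' (x - y)]

lemma rpow_lip' {q R : ℝ} (hq : 1 ≤ q) {a c : ℝ} (ha : a ∈ Set.Icc 0 R)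
    (hc : c ∈ Set.Icc 0 R) : a ^ q - c ^ q ≤ q * R ^ (q - 1) * |a - c| := by
  have hbound : ∀ t ∈ Set.Icc (0:ℝ) R, ‖q * t ^ (q - 1)‖ ≤ q * R ^ (q - 1) := by
    intro t ht
    have h1 : (0:ℝ) ≤ t ^ (q - 1) := Real.rpow_nonneg ht.1 _
    have h2 : t ^ (q - 1) ≤ R ^ (q - 1) := Real.rpow_le_rpow ht.1 ht.2 (by linarith)
    rw [Real.norm_eq_abs, abs_of_nonneg (by positivity)]
    exact mul_le_mul_of_nonneg_left h2 (by linarith)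
  have h := (convex_Icc (0:ℝ) R).norm_image_sub_le_of_norm_hasDerivWithin_le
    (f := fun t : ℝ => t ^ q) (f' := fun t => q * t ^ (q - 1))
    (fun t _ => (Real.hasDerivAt_rpow_const (Or.inr hq)).hasDerivWithinAt)
    hbound hc ha
  rw [Real.norm_eq_abs, Real.norm_eq_abs] at h
  calc a ^ q - c ^ q ≤ |a ^ q - c ^ q| := le_abs_self _
    _ ≤ q * R ^ (q - 1) * |a - c| := h

/-! ### Sign patterns and the uniform constant -/

section pattern
variable {N : ℕ} {ι : Type} [Fintype ι]

attribute [local instance] Classical.propDecidable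

def auxValid (G : ι → Fin N → ℝ) (p : Finset ι × (ι → Bool)) : Prop :=
  p.1.Nonempty ∧ ∃ z : Fin N → ℝ, (∀ j ∉ p.1, dotp (G j) z = 0) ∧
    ∀ j ∈ p.1, if p.2 j then 0 < dotp (G j) z else dotp (G j) z < 0

noncomputable def auxW (G : ι → Fin N → ℝ) (p : Finset ι × (ι → Bool)) : Fin N → ℝ :=
  if hp : auxValid G p then Classical.choose hp.2 else 0

lemma auxW_spec {G : ι → Fin N → ℝ} {p : Finset ι × (ι → Bool)} (hp : auxValid G p) :
    (∀ j ∉ p.1, dotp (G j) (auxW G p) = 0) ∧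
      ∀ j ∈ p.1, if p.2 j then 0 < dotp (G j) (auxW G p)
        else dotp (G j) (auxW G p) < 0 := by
  rw [auxW, dif_pos hp]
  exact Classical.choose_spec hp.2

noncomputable def auxRatio (G : ι → Fin N → ℝ) (C₀ : ℝ) (p : Finset ι × (ι → Bool)) : ℝ :=
  if hp : auxValid G p then
    C₀ * norm2 (auxW G p) / (p.1.inf' hp.1 fun j => |dotp (G j) (auxW G p)|)
  else 0

noncomputable def auxC1 (G : ι → Fin N → ℝ) (C₀ : ℝ) : ℝ :=
  Finset.univ.sup' ⟨(∅, fun _ => true), Finset.mem_univ _⟩ (auxRatio G C₀)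

lemma le_auxC1 (G : ι → Fin N → ℝ) (C₀ : ℝ) (p : Finset ι × (ι → Bool)) :
    auxRatio G C₀ p ≤ auxC1 G C₀ := by
  unfold auxC1
  exact Finset.le_sup' _ (Finset.mem_univ _)

end pattern

set_option maxHeartbeats 2000000 in
theorem uniform_lower_bound_of_iterates {M N : ℕ} {ι : Type} [Fintype ι]
    (A : Matrix (Fin M) (Fin N) ℝ) (b : Fin M → ℝ) (G : ι → Fin N → ℝ)
    (β q : ℝ) (hβ : 0 < β) (hq : 1 ≤ q)
    (φ φ' : ℝ → ℝ) (hφ : PhiAssumption φ φ')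
    (ρ ε Γ : ℝ) (hρ : 0 < ρ) (hε0 : 0 < ε) (hε1 : ε < 1) (hΓ : 0 < Γ) :
    ∃ θb > (0 : ℝ), ∀ (Sb : Finset ι), Sb.Nonempty →
      ∀ (K : ℕ) (x : ℕ → Fin N → ℝ),
      (∀ k : ℕ, K ≤ k → norm2 (x k) ≤ Γ) →
      (∀ k : ℕ, K ≤ k → ∀ i : ι, dotp (G i) (x k) ≠ 0 ↔ i ∈ Sb) →
      (∀ k : ℕ, K ≤ k → ∃ h : Fin N → ℝ,
        (∀ y : Fin N → ℝ, (∀ i : ι, i ∉ Sb → dotp (G i) y = 0) →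
          surrogate φ φ' A b G β q ρ Sb (x k) y ≥
            surrogate φ φ' A b G β q ρ Sb (x k) (x (k + 1)) +
              dotp h (y - x (k + 1))) ∧
        norm2 h ≤ ρ * ε / 2 * norm2 (x (k + 1) - x k)) →
      ∀ k : ℕ, K < k → ∀ i ∈ Sb, θb ≤ |dotp (G i) (x k)| := by
  classical
  -- global constants
  set KA : ℝ := ∑ l, norm2 (fun j => A l j) with hKAdef
  have hKA0 : 0 ≤ KA := Finset.sum_nonneg fun l _ => norm2_nonneg' _
  set Bsum : ℝ := ∑ l, |b l| with hBdef
  have hB0 : 0 ≤ Bsum := Finset.sum_nonneg fun l _ => abs_nonneg _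
  set R₀ : ℝ := 2 * Γ * KA + Bsum + 1 with hR₀def
  have hR₀pos : 0 < R₀ := by nlinarith
  set C₀ : ℝ := β * R₀ ^ (q - 1) * KA + 5 * ρ * Γ / 2 + ρ * Γ with hC₀def
  have hRq0 : (0:ℝ) ≤ R₀ ^ (q - 1) := Real.rpow_nonneg hR₀pos.le _
  have hC₀0 : 0 ≤ C₀ := by
    have h1 : (0:ℝ) ≤ β * R₀ ^ (q - 1) * KA := mul_nonneg (mul_nonneg hβ.le hRq0) hKA0
    rw [hC₀def]; nlinarith
  set C₁ : ℝ := auxC1 G C₀ with hC₁def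
  -- θ from the blow-up of φ' at 0⁺
  have hev : ∀ᶠ t in nhdsWithin 0 (Set.Ioi 0), C₁ < φ' t :=
    hφ.derivAtZero.eventually_gt_atTop C₁
  obtain ⟨δ, hδ0, hδ⟩ := Metric.mem_nhdsWithin_iff.mp hev
  refine ⟨δ, hδ0, ?_⟩
  intro Sb hSb K x hbound hsupp hstep k hk i hi
  have hku : K ≤ k := hk.le
  have hkv : K ≤ k + 1 := by omega
  obtain ⟨h, hH, hhn⟩ := hstep k hku
  set u := x k with hu
  set v := x (k + 1) with hv
  -- support facts
  have hsv : ∀ j ∈ Sb, dotp (G j) v ≠ 0 := fun j hj => (hsupp _ hkv j).mpr hj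
  have hsv0 : ∀ j, j ∉ Sb → dotp (G j) v = 0 := fun j hj => by
    by_contra hne; exact hj ((hsupp _ hkv j).mp hne)
  have hsu : ∀ j ∈ Sb, (0:ℝ) < |dotp (G j) u| := fun j hj =>
    abs_pos.mpr ((hsupp _ hku j).mpr hj)
  -- the sign pattern of v
  set σv : ι → Bool := fun j => decide (0 < dotp (G j) v) with hσdef
  have hpv : auxValid G (Sb, σv) := by
    refine ⟨hSb, v, hsv0, fun j hj => ?_⟩
    by_cases hc : 0 < dotp (G j) v
    · simpa [hσdef, hc] using hc
    · have h1 : dotp (G j) v < 0 := lt_of_le_of_ne (not_lt.mp hc) (hsv j hj)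
      simpa [hσdef, hc] using h1
  obtain ⟨hw0, hwsgn⟩ := auxW_spec hpv
  set w := auxW G (Sb, σv) with hwdef
  have hsign : ∀ j ∈ Sb, (0 < dotp (G j) v ∧ 0 < dotp (G j) w) ∨
      (dotp (G j) v < 0 ∧ dotp (G j) w < 0) := by
    intro j hj
    have hs := hwsgn j hj
    by_cases hc : 0 < dotp (G j) v
    · left; exact ⟨hc, by simpa [hσdef, hc] using hs⟩
    · right
      exact ⟨lt_of_le_of_ne (not_lt.mp hc) (hsv j hj), by simpa [hσdef, hc] using hs⟩
  have hwpos : ∀ j ∈ Sb, (0:ℝ) < |dotp (G j) w| := by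
    intro j hj
    rcases hsign j hj with ⟨_, h2⟩ | ⟨_, h2⟩
    · exact abs_pos.mpr (ne_of_gt h2)
    · exact abs_pos.mpr (ne_of_lt h2)
  -- the step size
  have hwn0 : (0:ℝ) < norm2 w + 1 := by linarith [norm2_nonneg' w]
  set sδ : ℝ := min (Γ / (norm2 w + 1))
      (Sb.inf' hSb fun j => |dotp (G j) v| / (|dotp (G j) w| + 1)) with hsdef
  have hs0 : 0 < sδ := by
    rw [hsdef]
    apply lt_min
    · positivity
    · rw [Finset.lt_inf'_iff]
      intro j hj
      have h1 := abs_pos.mpr (hsv j hj)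
      have h2 : (0:ℝ) < |dotp (G j) w| + 1 := by linarith [abs_nonneg (dotp (G j) w)]
      positivity
  have hsw : sδ * norm2 w ≤ Γ := by
    have h1 : sδ ≤ Γ / (norm2 w + 1) := min_le_left _ _
    have h2 : sδ * (norm2 w + 1) ≤ Γ := (le_div_iff₀ hwn0).mp h1
    nlinarith [norm2_nonneg' w, hs0]
  have hslt : ∀ j ∈ Sb, sδ * |dotp (G j) w| < |dotp (G j) v| := by
    intro j hj
    have h2 : (0:ℝ) < |dotp (G j) w| + 1 := by linarith [abs_nonneg (dotp (G j) w)]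
    have h1 : sδ ≤ |dotp (G j) v| / (|dotp (G j) w| + 1) :=
      le_trans (min_le_right _ _) (Finset.inf'_le _ hj)
    have h3 : sδ * (|dotp (G j) w| + 1) ≤ |dotp (G j) v| := (le_div_iff₀ h2).mp h1
    nlinarith [hs0]
  set y := v - sδ • w with hydef
  have hdy : ∀ j, dotp (G j) y = dotp (G j) v - sδ * dotp (G j) w := fun j => by
    rw [hydef, dotp_sub_right', dotp_smul_right']
  have habs : ∀ j ∈ Sb, |dotp (G j) y| = |dotp (G j) v| - sδ * |dotp (G j) w| := by
    intro j hj
    have h3 := hslt j hj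
    rcases hsign j hj with ⟨h1, h2⟩ | ⟨h1, h2⟩
    · rw [abs_of_pos h1, abs_of_pos h2] at h3 ⊢
      rw [hdy j, abs_of_pos (by linarith)]
    · rw [abs_of_neg h1, abs_of_neg h2] at h3 ⊢
      rw [hdy j, abs_of_neg (by linarith)]
      ring
  have hyC : ∀ j : ι, j ∉ Sb → dotp (G j) y = 0 := by
    intro j hj
    rw [hdy j, hsv0 j hj, hw0 j hj]
    ring
  have hkey := hH y hyC
  -- decomposition of the surrogate
  set Tf : (Fin N → ℝ) → ℝ := fun z => ∑ j ∈ Sb, φ' |dotp (G j) u| * |dotp (G j) z|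
    with hTf
  set Rf : (Fin N → ℝ) → ℝ := fun z => ∑ l, |A.mulVec z l - b l| ^ q with hRf
  have hsur : ∀ z, surrogate φ φ' A b G β q ρ Sb u z =
      (∑ j ∈ Sb, (φ |dotp (G j) u| - φ' |dotp (G j) u| * |dotp (G j) u|)) + Tf z
        + β / q * Rf z + ρ / 2 * norm2 (z - u) ^ 2 := by
    intro z
    simp only [surrogate, hTf, hRf]
    rw [Finset.sum_congr rfl (fun j (_ : j ∈ Sb) => show
      φ |dotp (G j) u| + φ' |dotp (G j) u| * (|dotp (G j) z| - |dotp (G j) u|)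
        = (φ |dotp (G j) u| - φ' |dotp (G j) u| * |dotp (G j) u|)
          + φ' |dotp (G j) u| * |dotp (G j) z| from by ring),
      Finset.sum_add_distrib]
    try ring
  set W : ℝ := ∑ j ∈ Sb, φ' |dotp (G j) u| * |dotp (G j) w| with hWdef
  have hTy : Tf y = Tf v - sδ * W := by
    simp only [hTf, hWdef]
    rw [Finset.mul_sum, ← Finset.sum_sub_distrib]
    refine Finset.sum_congr rfl fun j hj => ?_
    rw [habs j hj]; ring
  -- norm bounds
  have hnu : norm2 u ≤ Γ := hbound k hku
  have hnv : norm2 v ≤ Γ := hbound (k + 1) hkv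
  have hnvu : norm2 (v - u) ≤ 2 * Γ := le_trans (norm2_sub_le' v u) (by linarith)
  have hny : norm2 y ≤ 2 * Γ := by
    have h1 := norm2_sub_le' v (sδ • w)
    rw [norm2_smul', abs_of_pos hs0] at h1
    rw [hydef]
    linarith
  have hh : norm2 h ≤ ρ * Γ := by
    have ha1 : ρ * ε / 2 * norm2 (v - u) ≤ ρ * ε / 2 * (2 * Γ) :=
      mul_le_mul_of_nonneg_left hnvu (by positivity)
    have ha2 : ρ * ε / 2 * (2 * Γ) ≤ ρ * Γ := by
      nlinarith [mul_nonneg (mul_nonneg hρ.le hΓ.le) (by linarith : (0:ℝ) ≤ 1 - ε)]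
    linarith [hhn]
  -- the residual terms
  have hrow : ∀ l, norm2 (fun j => A l j) ≤ KA := by
    intro l
    rw [hKAdef]
    exact Finset.single_le_sum (f := fun l => norm2 (fun j => A l j))
      (fun l _ => norm2_nonneg' _) (Finset.mem_univ l)
  have hbl : ∀ l, |b l| ≤ Bsum := by
    intro l
    rw [hBdef]
    exact Finset.single_le_sum (f := fun l => |b l|)
      (fun l _ => abs_nonneg _) (Finset.mem_univ l)
  have hmv : ∀ (z : Fin N → ℝ) (l : Fin M), A.mulVec z l = dotp (fun j => A l j) z := by
    intro z l; simp [Matrix.mulVec, dotProduct, dotp]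
  have hres : ∀ z : Fin N → ℝ, norm2 z ≤ 2 * Γ → ∀ l, |A.mulVec z l - b l| ≤ R₀ := by
    intro z hz l
    have h1 : |A.mulVec z l| ≤ KA * (2 * Γ) := by
      rw [hmv]
      calc |dotp (fun j => A l j) z| ≤ norm2 (fun j => A l j) * norm2 z := abs_dotp_le' _ _
        _ ≤ KA * (2 * Γ) := mul_le_mul (hrow l) hz (norm2_nonneg' z) hKA0
    have h2 : |A.mulVec z l - b l| ≤ |A.mulVec z l| + |b l| := by
      rw [sub_eq_add_neg]
      exact (abs_add_le _ _).trans (by rw [abs_neg])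
    have h3 := hbl l
    rw [hR₀def]
    nlinarith
  have hyv : y - v = -(sδ • w) := by rw [hydef]; abel
  have hRdiff : Rf y - Rf v ≤ q * R₀ ^ (q - 1) * (sδ * (KA * norm2 w)) := by
    simp only [hRf]
    rw [← Finset.sum_sub_distrib]
    have hb1 : ∀ l ∈ (Finset.univ : Finset (Fin M)),
        |A.mulVec y l - b l| ^ q - |A.mulVec v l - b l| ^ q
          ≤ q * R₀ ^ (q - 1) * (sδ * (norm2 (fun j => A l j) * norm2 w)) := by
      intro l _
      have h1 : |A.mulVec y l - b l| ∈ Set.Icc 0 R₀ := ⟨abs_nonneg _, hres y hny l⟩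
      have h2 : |A.mulVec v l - b l| ∈ Set.Icc 0 R₀ :=
        ⟨abs_nonneg _, hres v (by linarith) l⟩
      have h3 := rpow_lip' hq h1 h2
      have h4 : |(|A.mulVec y l - b l| - |A.mulVec v l - b l|)|
          ≤ sδ * (norm2 (fun j => A l j) * norm2 w) := by
        calc |(|A.mulVec y l - b l| - |A.mulVec v l - b l|)|
            ≤ |(A.mulVec y l - b l) - (A.mulVec v l - b l)| :=
              abs_abs_sub_abs_le_abs_sub _ _
          _ = |sδ * dotp (fun j => A l j) w| := by
              rw [sub_sub_sub_cancel_right, hmv, hmv, ← dotp_sub_right', hyv,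
                dotp_neg_right', dotp_smul_right', abs_neg]
          _ = sδ * |dotp (fun j => A l j) w| := by
              rw [abs_mul, abs_of_pos hs0]
          _ ≤ sδ * (norm2 (fun j => A l j) * norm2 w) :=
              mul_le_mul_of_nonneg_left (abs_dotp_le' _ _) hs0.le
      calc |A.mulVec y l - b l| ^ q - |A.mulVec v l - b l| ^ q
          ≤ q * R₀ ^ (q - 1) * |(|A.mulVec y l - b l| - |A.mulVec v l - b l|)| := h3
        _ ≤ q * R₀ ^ (q - 1) * (sδ * (norm2 (fun j => A l j) * norm2 w)) := by
            apply mul_le_mul_of_nonneg_left h4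
            positivity
    calc ∑ l, (|A.mulVec y l - b l| ^ q - |A.mulVec v l - b l| ^ q)
        ≤ ∑ l, q * R₀ ^ (q - 1) * (sδ * (norm2 (fun j => A l j) * norm2 w)) :=
          Finset.sum_le_sum hb1
      _ = (q * R₀ ^ (q - 1) * sδ * norm2 w) * ∑ l, norm2 (fun j => A l j) := by
          rw [Finset.mul_sum]
          exact Finset.sum_congr rfl fun l _ => by ring
      _ = q * R₀ ^ (q - 1) * (sδ * (KA * norm2 w)) := by rw [← hKAdef]; ring
  -- the prox term
  have hNy : norm2 (y - u) ^ 2 ≤ norm2 (v - u) ^ 2 + sδ * (5 * Γ * norm2 w) := by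
    have h1 : y - u = (v - u) - sδ • w := by rw [hydef]; abel
    rw [h1, sum_sub_sq']
    have h2 : -dotp w (v - u) ≤ norm2 w * norm2 (v - u) := by
      have h5 := abs_dotp_le' w (v - u)
      have h6 := neg_abs_le (dotp w (v - u))
      linarith
    have h4 : 2 * sδ * (-dotp w (v - u)) ≤ 2 * sδ * (norm2 w * norm2 (v - u)) :=
      mul_le_mul_of_nonneg_left h2 (by positivity)
    have h5 : norm2 w * norm2 (v - u) ≤ norm2 w * (2 * Γ) :=
      mul_le_mul_of_nonneg_left hnvu (norm2_nonneg' w)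
    have h7 : 2 * sδ * (norm2 w * norm2 (v - u)) ≤ 2 * sδ * (norm2 w * (2 * Γ)) :=
      mul_le_mul_of_nonneg_left h5 (by positivity)
    have h3 : sδ ^ 2 * norm2 w ^ 2 = (sδ * norm2 w) * (sδ * norm2 w) := by ring
    have h6 : (sδ * norm2 w) * (sδ * norm2 w) ≤ Γ * (sδ * norm2 w) :=
      mul_le_mul_of_nonneg_right hsw (mul_nonneg hs0.le (norm2_nonneg' w))
    nlinarith [h4, h7, h3, h6]
  -- the inner product with h
  have hdh : dotp h (y - v) = -(sδ * dotp h w) := by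
    rw [hyv, dotp_neg_right', dotp_smul_right']
  have hdhb : -dotp h (y - v) ≤ sδ * (ρ * Γ) * norm2 w := by
    rw [hdh, neg_neg]
    have h1 : dotp h w ≤ norm2 h * norm2 w := dotp_le' h w
    have h2 : norm2 h * norm2 w ≤ ρ * Γ * norm2 w :=
      mul_le_mul_of_nonneg_right hh (norm2_nonneg' w)
    calc sδ * dotp h w ≤ sδ * (ρ * Γ * norm2 w) :=
          mul_le_mul_of_nonneg_left (h1.trans h2) hs0.le
      _ = sδ * (ρ * Γ) * norm2 w := by ring
  -- combine
  have hkey2 : sδ * W ≤ β / q * (Rf y - Rf v)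
      + ρ / 2 * (norm2 (y - u) ^ 2 - norm2 (v - u) ^ 2) - dotp h (y - v) := by
    have e1 := hsur y
    have e2 := hsur v
    rw [e1, e2, hTy] at hkey
    linarith [hkey]
  have hq0 : (0:ℝ) < q := by linarith
  have hB2 : β / q * (Rf y - Rf v) ≤ sδ * (β * R₀ ^ (q - 1) * KA) * norm2 w := by
    have h1 : β / q * (Rf y - Rf v)
        ≤ β / q * (q * R₀ ^ (q - 1) * (sδ * (KA * norm2 w))) :=
      mul_le_mul_of_nonneg_left hRdiff (by positivity)
    calc β / q * (Rf y - Rf v)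
        ≤ β / q * (q * R₀ ^ (q - 1) * (sδ * (KA * norm2 w))) := h1
      _ = sδ * (β * R₀ ^ (q - 1) * KA) * norm2 w := by field_simp
  have hB3 : ρ / 2 * (norm2 (y - u) ^ 2 - norm2 (v - u) ^ 2)
      ≤ sδ * (5 * ρ * Γ / 2) * norm2 w := by
    have h1 : norm2 (y - u) ^ 2 - norm2 (v - u) ^ 2 ≤ sδ * (5 * Γ * norm2 w) := by
      linarith [hNy]
    calc ρ / 2 * (norm2 (y - u) ^ 2 - norm2 (v - u) ^ 2)
        ≤ ρ / 2 * (sδ * (5 * Γ * norm2 w)) :=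
          mul_le_mul_of_nonneg_left h1 (by positivity)
      _ = sδ * (5 * ρ * Γ / 2) * norm2 w := by ring
  have hW : W ≤ C₀ * norm2 w := by
    have h1 : sδ * W ≤ sδ * (C₀ * norm2 w) := by
      have hC : sδ * (C₀ * norm2 w) = sδ * (β * R₀ ^ (q - 1) * KA) * norm2 w
          + sδ * (5 * ρ * Γ / 2) * norm2 w + sδ * (ρ * Γ) * norm2 w := by
        rw [hC₀def]; ring
      rw [hC]
      linarith [hkey2, hB2, hB3, hdhb]
    exact le_of_mul_le_mul_left h1 hs0
  -- extract the term for i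
  have hterm : φ' |dotp (G i) u| * |dotp (G i) w| ≤ W := by
    rw [hWdef]
    exact Finset.single_le_sum (f := fun j => φ' |dotp (G j) u| * |dotp (G j) w|)
      (fun j hj => mul_nonneg (hφ.derivPos _ (hsu j hj)).le (abs_nonneg _)) hi
  have hiw := hwpos i hi
  have hinf : (0:ℝ) < Sb.inf' hSb fun j => |dotp (G j) w| :=
    (Finset.lt_inf'_iff _).mpr hwpos
  have hφle : φ' |dotp (G i) u| ≤ C₁ := by
    have h1 : φ' |dotp (G i) u| ≤ C₀ * norm2 w / |dotp (G i) w| := by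
      rw [le_div_iff₀ hiw]
      linarith [hterm, hW]
    have h2 : C₀ * norm2 w / |dotp (G i) w| ≤ auxRatio G C₀ (Sb, σv) := by
      rw [auxRatio, dif_pos hpv, ← hwdef]
      exact div_le_div_of_nonneg_left (mul_nonneg hC₀0 (norm2_nonneg' w)) hinf
        (Finset.inf'_le _ hi)
    have h3 := le_auxC1 G C₀ (Sb, σv)
    rw [← hC₁def] at h3
    linarith
  -- conclude
  by_contra hcon
  push_neg at hcon
  have h0 : 0 < |dotp (G i) u| := hsu i hi
  have hmem : |dotp (G i) u| ∈ Metric.ball (0:ℝ) δ ∩ Set.Ioi 0 := by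
    constructor
    · rw [Metric.mem_ball, Real.dist_eq, sub_zero, abs_abs]
      exact hcon
    · exact h0
  have hgt := hδ hmem
  simp only [Set.mem_setOf_eq] at hgt
  linarith
end
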